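/- (Composition with side adaptive bound for EML-type guarantees) Let X, Y, Z be finite random variables. Suppose P_Y{y : ℓ(X→y) ≤ ε₁} ≥ 1−δ₁ and P_{YZ}{(y,z) : ℓ(X→z|y) ≤ ε₂} ≥ 1−δ₂. Then P_{YZ}{(y,z) : ℓ(X→(y,z)) ≤ ε₁+ε₂} ≥ 1 − δ₁ − δ₂. -/

import Mathlib

/-!
For every input `x` the likelihood ratio of `(y, z)` factors as the ratio of `y` times the
conditional ratio of `z` given `y`, so `ℓ(X→(y,z)) ≤ ε₁ + ε₂` wherever `ℓ(X→y) ≤ ε₁` and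
`ℓ(X→z|y) ≤ ε₂`. The union bound gives these outcomes `P_{YZ}`-mass at least `1 - δ₁ - δ₂`.
-/

open Finset Real

lemma Real.log_le_of_le_exp {x ε : ℝ} (hx : 0 ≤ x) (hε : 0 ≤ ε) (h : x ≤ exp ε) :
    log x ≤ ε := by
  rcases hx.eq_or_lt with rfl | hx
  · rwa [log_zero]
  · exact (log_le_iff_le_exp hx).2 h

lemma Finset.le_exp_of_log_sup'_le {α : Type*} {s : Finset α} (hs : s.Nonempty) {f : α → ℝ}
    {ε : ℝ} (h : log (s.sup' hs f) ≤ ε) {x : α} (hx : x ∈ s) : f x ≤ exp ε :=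
  (le_sup' f hx).trans (le_exp_of_log_le h)

lemma Finset.log_sup'_le_of_forall_le_exp {α : Type*} {s : Finset α} (hs : s.Nonempty)
    {f : α → ℝ} {ε : ℝ} (hε : 0 ≤ ε) (hf : ∀ x ∈ s, 0 ≤ f x) (h : ∀ x ∈ s, f x ≤ exp ε) :
    log (s.sup' hs f) ≤ ε :=
  have ⟨x, hx⟩ := hs
  log_le_of_le_exp ((hf x hx).trans (le_sup' f hx)) hε ((sup'_le_iff hs f).2 h)

/-- Chain rule for the likelihood ratio of one input `x` at an outcome `(y, z)`:
`P(y,z|x)/P(y,z) = P(y|x)/P(y) · P(z|x,y)/P(z|y)`, written with joint masses. -/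
lemma joint_ratio_le_exp_add {pxyz pxy px py pyz ε₁ ε₂ : ℝ} (hpx : 0 < px) (hpxyz : 0 ≤ pxyz)
    (hpxyz_le : pxyz ≤ pxy) (hpyz : 0 ≤ pyz) (hpyz_le : pyz ≤ py)
    (h₁ : pxy / (px * py) ≤ exp ε₁)
    (h₂ : 0 < py → 0 < pxy → pxyz * py / (pxy * pyz) ≤ exp ε₂) :
    pxyz / (px * pyz) ≤ exp (ε₁ + ε₂) := by
  rcases hpxyz.eq_or_lt with rfl | hpxyz_pos
  · rw [zero_div]; positivity
  have hpxy : 0 < pxy := hpxyz_pos.trans_le hpxyz_le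
  rcases hpyz.eq_or_lt with rfl | hpyz_pos
  · rw [mul_zero, div_zero]; positivity
  have hpy : 0 < py := hpyz_pos.trans_le hpyz_le
  calc pxyz / (px * pyz) = pxy / (px * py) * (pxyz * py / (pxy * pyz)) := by
        field_simp
    _ ≤ exp ε₁ * exp ε₂ := mul_le_mul h₁ (h₂ hpy hpxy) (by positivity) (exp_pos _).le
    _ = exp (ε₁ + ε₂) := (exp_add _ _).symm

lemma Finset.one_sub_sub_le_sum_inter {ι : Type*} [Fintype ι] [DecidableEq ι] {w : ι → ℝ}
    (hw : ∀ i, 0 ≤ w i) (htot : ∑ i, w i ≤ 1) {s t : Finset ι} {δ₁ δ₂ : ℝ}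
    (hs : 1 - δ₁ ≤ ∑ i ∈ s, w i) (ht : 1 - δ₂ ≤ ∑ i ∈ t, w i) :
    1 - δ₁ - δ₂ ≤ ∑ i ∈ s ∩ t, w i := by
  have hunion : ∑ i ∈ s ∪ t, w i ≤ ∑ i, w i :=
    sum_le_sum_of_subset_of_nonneg (subset_univ _) fun i _ _ => hw i
  linarith [sum_union_inter (s₁ := s) (s₂ := t) (f := w)]

theorem stmt_19_general {α β γ : Type*} [Fintype α] [Fintype β] [Fintype γ]
    (p : α → β → γ → ℝ)
    (hp : ∀ x y z, 0 ≤ p x y z)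
    (hsum : ∑ x, ∑ y, ∑ z, p x y z = 1)
    (pX : α → ℝ)
    (pY : β → ℝ) (hpY : ∀ y, pY y = ∑ x, ∑ z, p x y z)
    (pXY : α → β → ℝ) (hpXY : ∀ x y, pXY x y = ∑ z, p x y z)
    (pYZ : β → γ → ℝ) (hpYZ : ∀ y z, pYZ y z = ∑ x, p x y z)
    (sX : Finset α) (hsX : ∀ x, x ∈ sX ↔ 0 < pX x) (hneX : sX.Nonempty)
    (sXY : β → Finset α) (hsXY : ∀ y x, x ∈ sXY y ↔ 0 < pXY x y)
    (hneXY : ∀ y, 0 < pY y → (sXY y).Nonempty)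
    (ε₁ ε₂ : ℝ) (hε₁ : 0 ≤ ε₁) (hε₂ : 0 ≤ ε₂)
    (δ₁ δ₂ : ℝ)
    (GY : Finset β)
    (hGY : ∀ y, y ∈ GY ↔
      Real.log (sX.sup' hneX fun x => pXY x y / (pX x * pY y)) ≤ ε₁)
    (h1 : 1 - δ₁ ≤ ∑ y ∈ GY, pY y)
    (GZ : Finset (β × γ))
    (hGZ : ∀ q : β × γ, ∀ hy : 0 < pY q.1, (q ∈ GZ ↔
      Real.log ((sXY q.1).sup' (hneXY q.1 hy) fun x =>
        p x q.1 q.2 * pY q.1 / (pXY x q.1 * pYZ q.1 q.2)) ≤ ε₂))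
    (h2 : 1 - δ₂ ≤ ∑ q ∈ GZ, pYZ q.1 q.2)
    (GYZ : Finset (β × γ))
    (hGYZ : ∀ q : β × γ, q ∈ GYZ ↔
      Real.log (sX.sup' hneX fun x => p x q.1 q.2 / (pX x * pYZ q.1 q.2)) ≤ ε₁ + ε₂) :
    1 - δ₁ - δ₂ ≤ ∑ q ∈ GYZ, pYZ q.1 q.2 := by
  classical
  have hpYZ_nonneg : ∀ y z, 0 ≤ pYZ y z := fun y z =>
    hpYZ y z ▸ sum_nonneg fun x _ => hp x y z
  have hp_le_pXY : ∀ x y z, p x y z ≤ pXY x y := fun x y z =>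
    hpXY x y ▸ single_le_sum (fun z _ => hp x y z) (mem_univ z)
  have hpY_eq : ∀ y, pY y = ∑ z, pYZ y z := fun y => by
    rw [hpY, sum_comm]; simp only [hpYZ]
  have hpYZ_le : ∀ y z, pYZ y z ≤ pY y := fun y z =>
    hpY_eq y ▸ single_le_sum (fun z _ => hpYZ_nonneg y z) (mem_univ z)
  have htotal : ∑ q : β × γ, pYZ q.1 q.2 = 1 := by
    rw [Fintype.sum_prod_type, ← hsum]
    simp only [← hpY_eq, hpY]
    exact sum_comm
  have hGY_mass : ∑ q ∈ GY ×ˢ univ, pYZ q.1 q.2 = ∑ y ∈ GY, pY y := by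
    rw [sum_product]; simp only [hpY_eq]
  have hgood : GY ×ˢ univ ∩ GZ ⊆ GYZ := by
    rintro ⟨y, z⟩ hq
    obtain ⟨hy, hyz⟩ := mem_inter.1 hq
    rw [hGYZ]
    refine log_sup'_le_of_forall_le_exp hneX (by positivity)
      (fun x hx => div_nonneg (hp x y z) (mul_nonneg ((hsX x).1 hx).le (hpYZ_nonneg y z)))
      fun x hx => joint_ratio_le_exp_add ((hsX x).1 hx) (hp x y z) (hp_le_pXY x y z)
        (hpYZ_nonneg y z) (hpYZ_le y z)
        (le_exp_of_log_sup'_le hneX ((hGY y).1 (mem_product.1 hy).1) hx)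
        fun hpy hpxy => le_exp_of_log_sup'_le _ ((hGZ (y, z) hpy).1 hyz) ((hsXY y x).2 hpxy)
  calc 1 - δ₁ - δ₂ ≤ ∑ q ∈ GY ×ˢ univ ∩ GZ, pYZ q.1 q.2 :=
        one_sub_sub_le_sum_inter (fun (q : β × γ) => hpYZ_nonneg q.1 q.2) htotal.le
          (hGY_mass ▸ h1) h2
    _ ≤ ∑ q ∈ GYZ, pYZ q.1 q.2 :=
        sum_le_sum_of_subset_of_nonneg hgood fun (q : β × γ) _ _ => hpYZ_nonneg q.1 q.2

/-- Composition via union bound: (ε₁,δ₁) tail bound on ℓ(X→Y) and (ε₂,δ₂) tail bound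
on ℓ(X→Z|Y) under P_{YZ} imply a (ε₁+ε₂, δ₁+δ₂) tail bound on ℓ(X→(Y,Z)). -/
theorem stmt_19 {α β γ : Type*} [Fintype α] [Fintype β] [Fintype γ]
    (p : α → β → γ → ℝ)
    (hp : ∀ x y z, 0 ≤ p x y z)
    (hsum : ∑ x, ∑ y, ∑ z, p x y z = 1)
    (pX : α → ℝ) (hpX : ∀ x, pX x = ∑ y, ∑ z, p x y z)
    (pY : β → ℝ) (hpY : ∀ y, pY y = ∑ x, ∑ z, p x y z)
    (pXY : α → β → ℝ) (hpXY : ∀ x y, pXY x y = ∑ z, p x y z)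
    (pYZ : β → γ → ℝ) (hpYZ : ∀ y z, pYZ y z = ∑ x, p x y z)
    (sX : Finset α) (hsX : ∀ x, x ∈ sX ↔ 0 < pX x) (hneX : sX.Nonempty)
    (sXY : β → Finset α) (hsXY : ∀ y x, x ∈ sXY y ↔ 0 < pXY x y)
    (hneXY : ∀ y, 0 < pY y → (sXY y).Nonempty)
    (ε₁ ε₂ : ℝ) (hε₁ : 0 ≤ ε₁) (hε₂ : 0 ≤ ε₂)
    (δ₁ δ₂ : ℝ) (hδ₁ : 0 ≤ δ₁ ∧ δ₁ ≤ 1) (hδ₂ : 0 ≤ δ₂ ∧ δ₂ ≤ 1)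
    (GY : Finset β)
    (hGY : ∀ y, y ∈ GY ↔
      Real.log (sX.sup' hneX fun x => pXY x y / (pX x * pY y)) ≤ ε₁)
    (h1 : 1 - δ₁ ≤ ∑ y ∈ GY, pY y)
    (GZ : Finset (β × γ))
    (hGZ : ∀ q : β × γ, ∀ hy : 0 < pY q.1, (q ∈ GZ ↔
      Real.log ((sXY q.1).sup' (hneXY q.1 hy) fun x =>
        p x q.1 q.2 * pY q.1 / (pXY x q.1 * pYZ q.1 q.2)) ≤ ε₂))
    (h2 : 1 - δ₂ ≤ ∑ q ∈ GZ, pYZ q.1 q.2)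
    (GYZ : Finset (β × γ))
    (hGYZ : ∀ q : β × γ, q ∈ GYZ ↔
      Real.log (sX.sup' hneX fun x => p x q.1 q.2 / (pX x * pYZ q.1 q.2)) ≤ ε₁ + ε₂) :
    1 - δ₁ - δ₂ ≤ ∑ q ∈ GYZ, pYZ q.1 q.2 :=
  stmt_19_general p hp hsum pX pY hpY pXY hpXY pYZ hpYZ sX hsX hneX sXY hsXY hneXY ε₁ ε₂ hε₁ hε₂ δ₁
    δ₂ GY hGY h1 GZ hGZ h2 GYZ hGYZ
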